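/- Let ω be a truncated normal random variable with density f_TN(· | μ_ω, σ_ω², a, b), fix s ∈ ℝ, set Δ = s − ω, and let m, k be non-negative integers and α < β reals with a ≤ s − β and s − α ≤ b. Then E[ω^m Δ^k 1{α ≤ Δ ≤ β}] = [ (Φ((s − α − μ_ω)/σ_ω) − Φ((s − β − μ_ω)/σ_ω)) / (Φ((b − μ_ω)/σ_ω) − Φ((a − μ_ω)/σ_ω)) ] · Σ_{l=0}^{k} C(k,l) (−1)^l s^{k−l} m_TN^{(m+l)}(μ_ω, σ_ω², s − β, s − α), where C(k,l) is the binomial coefficient and m_TN^{(j)}(μ, σ², a', b') = ∫_{a'}^{b'} x^j f_TN(x | μ, σ², a', b') dx is the j-th moment of the truncated normal distribution on (a', b'). (Equation (16) of the paper.) -/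
import Mathlib


open MeasureTheory Matrix Real

/-- The standard normal probability density function φ. -/
noncomputable def stdPDF (x : ℝ) : ℝ :=
  (Real.sqrt (2 * Real.pi))⁻¹ * Real.exp (-(x ^ 2) / 2)

/-- The standard normal cumulative distribution function Φ. -/
noncomputable def stdCDF (x : ℝ) : ℝ := ∫ t in Set.Iic x, stdPDF t

/-- The `n`-variate normal density `φ_n(x | μ, Σ)`. -/
noncomputable def mvnPDF {n : ℕ} (μ : Fin n → ℝ) (S : Matrix (Fin n) (Fin n) ℝ)
    (x : Fin n → ℝ) : ℝ :=
  (Real.sqrt ((2 * Real.pi) ^ n * S.det))⁻¹ *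
    Real.exp (-((x - μ) ⬝ᵥ (S⁻¹ *ᵥ (x - μ))) / 2)

/-- The truncated normal density `f_TN(x | m, s², l, u)`. -/
noncomputable def tnPDF (m s l u x : ℝ) : ℝ :=
  (if l < x ∧ x < u then s⁻¹ * stdPDF ((x - m) / s) else 0) /
    (stdCDF ((u - m) / s) - stdCDF ((l - m) / s))

/-- The `j`-th moment of the truncated normal distribution on `(a, b)`. -/
noncomputable def mTN (j : ℕ) (m s a b : ℝ) : ℝ := ∫ x in a..b, x ^ j * tnPDF m s a b x

lemma stdPDF_pos (x : ℝ) : 0 < stdPDF x := by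
  unfold stdPDF
  positivity

lemma stdPDF_continuous : Continuous stdPDF := by
  unfold stdPDF; fun_prop

lemma stdPDF_integrable : Integrable stdPDF := by
  have h : Integrable (fun x : ℝ => Real.exp (-(1/2 : ℝ) * x ^ 2)) :=
    integrable_exp_neg_mul_sq (by norm_num)
  have h2 := h.const_mul (Real.sqrt (2 * Real.pi))⁻¹
  convert h2 using 2 with x
  unfold stdPDF
  ring_nf

lemma stdCDF_sub (x y : ℝ) : stdCDF y - stdCDF x = ∫ t in x..y, stdPDF t :=
  intervalIntegral.integral_Iic_sub_Iic stdPDF_integrable.integrableOn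
    stdPDF_integrable.integrableOn

lemma stdCDF_lt {x y : ℝ} (h : x < y) : stdCDF x < stdCDF y := by
  have hpos : 0 < ∫ t in x..y, stdPDF t :=
    intervalIntegral.intervalIntegral_pos_of_pos stdPDF_integrable.intervalIntegrable
      stdPDF_pos h
  have := stdCDF_sub x y
  linarith

lemma ae_ne' (u : ℝ) : ∀ᵐ x : ℝ, x ≠ u := by
  rw [MeasureTheory.ae_iff]
  simp only [ne_eq, not_not, Set.setOf_eq_eq_singleton]
  exact measure_singleton u

lemma tn_moment_eq (μ σ l u : ℝ) (hlu : l < u) (j : ℕ) :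
    mTN j μ σ l u = (∫ x in l..u, x ^ j * (σ⁻¹ * stdPDF ((x - μ) / σ))) /
      (stdCDF ((u - μ) / σ) - stdCDF ((l - μ) / σ)) := by
  unfold mTN
  rw [← intervalIntegral.integral_div]
  apply intervalIntegral.integral_congr_ae
  filter_upwards [ae_ne' u] with x hx hmem
  rw [Set.uIoc_of_le hlu.le] at hmem
  have h2 : x < u := lt_of_le_of_ne hmem.2 hx
  unfold tnPDF
  rw [if_pos ⟨hmem.1, h2⟩]
  ring


/-- Equation (16): `E[ω^m Δ^k 1{α ≤ Δ ≤ β}]` for a truncated normal `ω` and `Δ = s − ω`,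
expressed via truncated normal moments. -/
theorem truncated_normal_moment_identity
    (μω σω a b s : ℝ) (hσω : 0 < σω) (hab : a < b)
    (m k : ℕ) (α β : ℝ) (hαβ : α < β) (h₁ : a ≤ s - β) (h₂ : s - α ≤ b) :
    (∫ x in a..b,
        x ^ m * (s - x) ^ k * (if α ≤ s - x ∧ s - x ≤ β then (1 : ℝ) else 0) *
          tnPDF μω σω a b x)
      = ((stdCDF ((s - α - μω) / σω) - stdCDF ((s - β - μω) / σω)) /
          (stdCDF ((b - μω) / σω) - stdCDF ((a - μω) / σω))) *
        ∑ l ∈ Finset.range (k + 1),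
          (k.choose l : ℝ) * (-1) ^ l * s ^ (k - l) *
            mTN (m + l) μω σω (s - β) (s - α) := by
  have hβα : s - β < s - α := by linarith
  set Z : ℝ := stdCDF ((b - μω) / σω) - stdCDF ((a - μω) / σω) with hZ
  set Z' : ℝ := stdCDF ((s - α - μω) / σω) - stdCDF ((s - β - μω) / σω) with hZ'
  have hZ'pos : 0 < Z' := by
    have : (s - β - μω) / σω < (s - α - μω) / σω := by gcongr <;> linarith
    have := stdCDF_lt this
    simp only [hZ']; linarith
  -- the untruncated (numerator) density
  set q : ℝ → ℝ := fun x => σω⁻¹ * stdPDF ((x - μω) / σω) with hq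
  have hqcont : Continuous q := by
    simp only [hq]
    exact continuous_const.mul (stdPDF_continuous.comp (by fun_prop))
  -- continuity of polynomial times q
  have hcont : ∀ j : ℕ, Continuous fun x : ℝ => x ^ j * q x := fun j =>
    (continuous_pow j).mul hqcont
  have hcont2 : Continuous fun x : ℝ => x ^ m * (s - x) ^ k * q x := by fun_prop
  -- the indicator function F
  set F : ℝ → ℝ :=
    (Set.Ioo (s - β) (s - α)).indicator (fun x => x ^ m * (s - x) ^ k * q x) with hF
  have hFint : ∀ l u : ℝ, IntervalIntegrable F volume l u := by
    intro l u
    rw [intervalIntegrable_iff]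
    exact (intervalIntegrable_iff.mp (hcont2.intervalIntegrable l u)).indicator
      measurableSet_Ioo
  -- Step 1: pull out the denominator Z
  have step1 : (∫ x in a..b,
        x ^ m * (s - x) ^ k * (if α ≤ s - x ∧ s - x ≤ β then (1 : ℝ) else 0) *
          tnPDF μω σω a b x)
      = (∫ x in a..b,
          x ^ m * (s - x) ^ k * (if α ≤ s - x ∧ s - x ≤ β then (1 : ℝ) else 0) *
            (if a < x ∧ x < b then q x else 0)) / Z := by
    rw [← intervalIntegral.integral_div]
    apply intervalIntegral.integral_congr
    intro x _
    simp only [tnPDF, hq, ← hZ]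
    ring
  -- Step 2: replace integrand by F a.e.
  have step2 : (∫ x in a..b,
          x ^ m * (s - x) ^ k * (if α ≤ s - x ∧ s - x ≤ β then (1 : ℝ) else 0) *
            (if a < x ∧ x < b then q x else 0))
      = ∫ x in a..b, F x := by
    apply intervalIntegral.integral_congr_ae
    filter_upwards [ae_ne' (s - β), ae_ne' (s - α)] with x hx1 hx2 hmem
    rw [Set.uIoc_of_le hab.le] at hmem
    by_cases hio : x ∈ Set.Ioo (s - β) (s - α)
    · rw [hF, Set.indicator_of_mem hio]
      obtain ⟨hl, hr⟩ := hio
      rw [if_pos ⟨by linarith, by linarith⟩, if_pos ⟨by linarith, by linarith⟩]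
      ring
    · rw [hF, Set.indicator_of_notMem hio]
      have : ¬ (α ≤ s - x ∧ s - x ≤ β) := by
        simp only [Set.mem_Ioo, not_and_or, not_lt] at hio
        rcases hio with h | h
        · have : x < s - β := lt_of_le_of_ne h hx1
          intro hc; linarith [hc.2]
        · have : s - α < x := lt_of_le_of_ne h (Ne.symm hx2)
          intro hc; linarith [hc.1]
      rw [if_neg this]
      ring
  -- Step 3: shrink the interval of integration
  have e1 : (∫ x in a..(s - β), F x) = 0 := by
    rw [intervalIntegral.integral_congr (g := fun _ => (0 : ℝ)), intervalIntegral.integral_zero]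
    intro x hx
    rw [Set.uIcc_of_le h₁] at hx
    exact Set.indicator_of_notMem (fun hc => absurd hx.2 (not_le.mpr hc.1)) _
  have e2 : (∫ x in (s - α)..b, F x) = 0 := by
    rw [intervalIntegral.integral_congr (g := fun _ => (0 : ℝ)), intervalIntegral.integral_zero]
    intro x hx
    rw [Set.uIcc_of_le h₂] at hx
    exact Set.indicator_of_notMem (fun hc => absurd hx.1 (not_le.mpr hc.2)) _
  have step3 : (∫ x in a..b, F x) = ∫ x in (s - β)..(s - α), F x := by
    rw [← intervalIntegral.integral_add_adjacent_intervals (hFint a (s - β)) (hFint (s - β) b),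
      ← intervalIntegral.integral_add_adjacent_intervals (hFint (s - β) (s - α))
        (hFint (s - α) b), e1, e2]
    ring
  -- Step 4: drop the indicator on the small interval
  have step4 : (∫ x in (s - β)..(s - α), F x)
      = ∫ x in (s - β)..(s - α), x ^ m * (s - x) ^ k * q x := by
    apply intervalIntegral.integral_congr_ae
    filter_upwards [ae_ne' (s - α)] with x hx hmem
    rw [Set.uIoc_of_le hβα.le] at hmem
    exact Set.indicator_of_mem (Set.mem_Ioo.mpr ⟨hmem.1, lt_of_le_of_ne hmem.2 hx⟩) _
  -- Step 5: binomial expansion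
  have step5 : (∫ x in (s - β)..(s - α), x ^ m * (s - x) ^ k * q x)
      = ∑ l ∈ Finset.range (k + 1),
          (k.choose l : ℝ) * (-1) ^ l * s ^ (k - l) *
            ∫ x in (s - β)..(s - α), x ^ (m + l) * q x := by
    have expand : ∀ x : ℝ, x ^ m * (s - x) ^ k * q x
        = ∑ l ∈ Finset.range (k + 1),
            (k.choose l : ℝ) * (-1) ^ l * s ^ (k - l) * (x ^ (m + l) * q x) := by
      intro x
      have h : s - x = -x + s := by ring
      rw [h, add_pow, Finset.mul_sum, Finset.sum_mul]
      refine Finset.sum_congr rfl fun l hl => ?_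
      rw [neg_pow, pow_add]
      ring
    rw [intervalIntegral.integral_congr (fun x _ => expand x),
      intervalIntegral.integral_finset_sum
        (fun i _ => ((hcont (m + i)).intervalIntegrable _ _).const_mul _)]
    refine Finset.sum_congr rfl fun l hl => ?_
    rw [intervalIntegral.integral_const_mul]
  -- Step 6: rewrite the moments and conclude
  have hZpos : 0 < Z := by
    have : (a - μω) / σω < (b - μω) / σω := by gcongr <;> linarith
    have := stdCDF_lt this
    simp only [hZ]; linarith
  have hm : ∀ l ∈ Finset.range (k + 1),
      (k.choose l : ℝ) * (-1) ^ l * s ^ (k - l) * mTN (m + l) μω σω (s - β) (s - α)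
      = (k.choose l : ℝ) * (-1) ^ l * s ^ (k - l) *
          (∫ x in (s - β)..(s - α), x ^ (m + l) * q x) / Z' := by
    intro l _
    rw [tn_moment_eq _ _ _ _ hβα]
    simp only [hq, ← hZ']
    ring
  rw [step1, step2, step3, step4, step5, Finset.sum_congr rfl hm, ← Finset.sum_div]
  field_simp
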